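/- Let π be a permutation of {1,…,d} and let A be a real d×d matrix with A[i,j] = 0 whenever π(i) ≥ π(j). Then tr(exp(A ∘ A)) = d, i.e., the acyclicity penalty h(A) = tr(exp(A∘A)) − d vanishes. -/

import Mathlib

open Matrix NormedSpace
open scoped Matrix

/-!
If `M i j = 0` whenever `b j ≤ b i` for a rank function `b : ι → ℕ`, then every nonzero term of
`(M ^ k) i j = ∑ M i l₁ M l₁ l₂ ⋯ M lₖ₋₁ j` follows a path along which `b` strictly increases,
so `(M ^ k) i j = 0` unless `b i + k ≤ b j`. Hence `M` is nilpotent and all positive powers of `M`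
have zero diagonal, so the exponential series of `M` is a finite sum whose trace is `tr 1`.
`A ⊙ A` vanishes wherever `A` does, so this applies to it with `b = π`.
-/

namespace NormedSpace

theorem exp_eq_sum_range_of_pow_eq_zero (𝕂 : Type*) {𝔸 : Type*} [Field 𝕂] [CharZero 𝕂] [Ring 𝔸]
    [Algebra 𝕂 𝔸] [TopologicalSpace 𝔸] [IsTopologicalRing 𝔸] {x : 𝔸} {n : ℕ} (hx : x ^ n = 0) :
    exp x = ∑ i ∈ Finset.range n, ((i.factorial : 𝕂)⁻¹) • x ^ i := by
  rw [exp_eq_tsum 𝕂]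
  refine tsum_eq_sum fun i hi ↦ ?_
  rw [pow_eq_zero_of_le (by simpa using hi) hx, smul_zero]

end NormedSpace

namespace Matrix

section StrictlyIncreasingRank

variable {ι R : Type*} [Fintype ι] [DecidableEq ι] [Semiring R] {M : Matrix ι ι R} {b : ι → ℕ}

theorem pow_apply_eq_zero_of_lt_add (hM : ∀ i j, b j ≤ b i → M i j = 0) :
    ∀ (k : ℕ) (i j : ι), b j < b i + k → (M ^ k) i j = 0
  | 0, i, j, hij => one_apply_ne fun h ↦ by subst h; omega
  | k + 1, i, j, hij => by
    rw [pow_succ, mul_apply]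
    refine Finset.sum_eq_zero fun l _ ↦ ?_
    rcases lt_or_ge (b l) (b i + k) with hl | hl
    · rw [pow_apply_eq_zero_of_lt_add hM k i l hl, zero_mul]
    · rw [hM l j (by omega), mul_zero]

theorem pow_eq_zero_of_forall_lt (hM : ∀ i j, b j ≤ b i → M i j = 0) {n : ℕ}
    (hn : ∀ i, b i < n) : M ^ n = 0 :=
  ext fun i j ↦ pow_apply_eq_zero_of_lt_add hM n i j (by have := hn j; omega)

theorem trace_pow_eq_zero_of_ne_zero (hM : ∀ i j, b j ≤ b i → M i j = 0) {k : ℕ} (hk : k ≠ 0) :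
    (M ^ k).trace = 0 :=
  Finset.sum_eq_zero fun i _ ↦ pow_apply_eq_zero_of_lt_add hM k i i (by omega)

end StrictlyIncreasingRank

theorem trace_exp_eq_card {ι 𝕂 : Type*} [Fintype ι] [DecidableEq ι] [Field 𝕂] [CharZero 𝕂]
    [TopologicalSpace 𝕂] [IsTopologicalRing 𝕂] {M : Matrix ι ι 𝕂} (hM : IsNilpotent M)
    (htr : ∀ k ≠ 0, (M ^ k).trace = 0) : (exp M).trace = Fintype.card ι := by
  obtain ⟨n, hn⟩ := hM
  rw [exp_eq_sum_range_of_pow_eq_zero 𝕂 (pow_eq_zero_of_le n.le_succ hn), trace_sum,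
    Finset.sum_range_succ']
  simp [trace_smul, htr]

end Matrix

theorem acyclicity_penalty_vanishes_of_topological_order {d : ℕ} (π : Equiv.Perm (Fin d))
    (A : Matrix (Fin d) (Fin d) ℝ) (hA : ∀ i j, π j ≤ π i → A i j = 0) :
    (exp (A ⊙ A)).trace = d := by
  have hAA : ∀ i j, (π j : ℕ) ≤ π i → (A ⊙ A) i j = 0 := fun i j h ↦ by
    rw [hadamard_apply, hA i j (Fin.le_iff_val_le_val.mpr h), zero_mul]
  have hnil : IsNilpotent (A ⊙ A) := ⟨d, pow_eq_zero_of_forall_lt hAA fun i ↦ (π i).is_lt⟩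
  simpa using trace_exp_eq_card hnil fun k hk ↦ trace_pow_eq_zero_of_ne_zero hAA hk
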